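/- arXiv:2001.08795 — 4 statements merged into one kernel-verified Lean document; each statement's English description precedes it below -/
import Mathlib

section
/- Let A be a commutative ℤ-graded ring whose non-negative part A_{≥0} is generated as an A₀-algebra by homogeneous elements f₁,…,f_p of positive degrees d₁,…,d_p. Let d > 0 be a positive integer divisible by each dᵢ. Then for any integer N > dp − (d₁ + ⋯ + d_p), one has A_N = A_d · A_{N−d}, i.e., every element of A_N is a sum of products of an element of A_d with an element of A_{N−d}. -/
/-!
Every element of `A_N` with `N ≥ 0` is a polynomial in the `fᵢ` over `A₀`; projecting onto
degree `N` leaves a sum of monomials `c · ∏ fᵢ ^ eᵢ` with `c ∈ A₀` and `∑ eᵢ dᵢ = N`. For such a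
monomial `∑ (eᵢ + 1) dᵢ = N + ∑ dᵢ > d p`, so some `(eᵢ + 1) dᵢ > d`; since `dᵢ ∣ d`, the power
`fᵢ ^ (d / dᵢ)` divides the monomial, splitting it as an element of `A_d` times one of `A_{N-d}`.
-/

open DirectSum

theorem exists_le_mul_eq_of_sum_lt {ι : Type*} [Fintype ι] (e : ι → ℕ) (deg : ι → ℤ) {d : ℤ}
    (hd : 0 < d) (hdvd : ∀ i, deg i ∣ d)
    (h : d * Fintype.card ι - ∑ i, deg i < ∑ i, (e i : ℤ) * deg i) :
    ∃ i, ∃ k ≤ e i, (k : ℤ) * deg i = d := by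
  have hsum : ∑ _i : ι, d < ∑ i, ((e i : ℤ) + 1) * deg i := by
    simp only [Finset.sum_const, Finset.card_univ, nsmul_eq_mul, add_mul, one_mul,
      Finset.sum_add_distrib]
    linarith
  obtain ⟨i, -, hi⟩ := Finset.exists_lt_of_sum_lt hsum
  obtain ⟨m, rfl⟩ := hdvd i
  have hdeg : 0 < deg i := by
    by_contra! hdeg
    nlinarith
  have hm : 0 < m := pos_of_mul_pos_right hd hdeg.le
  lift m to ℕ using hm.le
  refine ⟨i, m, ?_, mul_comm _ _⟩
  have : (m : ℤ) < e i + 1 := by nlinarith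
  omega

section

variable {ι A : Type*} [DecidableEq ι] [AddMonoid ι] [Ring A]
  (𝒜 : ι → AddSubgroup A) [GradedRing 𝒜]

theorem GradedRing.mem_closure_of_mem_closure_iUnion {S : ι → Set A} (hS : ∀ i, S i ⊆ 𝒜 i)
    {n : ι} {a : A} (ha : a ∈ AddSubgroup.closure (⋃ i, S i)) (han : a ∈ 𝒜 n) :
    a ∈ AddSubgroup.closure (S n) := by
  have hproj : ∀ {x i}, x ∈ S i → GradedRing.proj 𝒜 n x ∈ AddSubgroup.closure (S n) := by
    intro x i hx
    by_cases hi : i = n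
    · subst hi
      simpa [decompose_of_mem_same 𝒜 (hS i hx)] using AddSubgroup.subset_closure hx
    · simp [decompose_of_mem_ne 𝒜 (hS i hx) hi]
  have hmap : (AddSubgroup.closure (⋃ i, S i)).map (GradedRing.proj 𝒜 n) ≤
      AddSubgroup.closure (S n) := by
    rw [AddMonoidHom.map_closure, AddSubgroup.closure_le]
    rintro _ ⟨x, hx, rfl⟩
    obtain ⟨i, hxi⟩ := Set.mem_iUnion.1 hx
    exact hproj hxi
  simpa [decompose_of_mem_same 𝒜 han] using hmap (AddSubgroup.mem_map_of_mem _ ha)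

end

section

variable {A ι : Type*} [CommRing A] (𝒜 : ℤ → AddSubgroup A) [GradedRing 𝒜] [Fintype ι]
  (f : ι → A) (deg : ι → ℤ)

def gradedMonomials (n : ℤ) : Set A :=
  {x | ∃ c ∈ 𝒜 0, ∃ e : ι → ℕ, ∑ i, (e i : ℤ) * deg i = n ∧ x = c * ∏ i, f i ^ e i}

variable {𝒜 f deg}

theorem gradedMonomials_subset (hf : ∀ i, f i ∈ 𝒜 (deg i)) (n : ℤ) :
    gradedMonomials 𝒜 f deg n ⊆ 𝒜 n := by
  rintro _ ⟨c, hc, e, rfl, rfl⟩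
  simpa [nsmul_eq_mul] using
    SetLike.mul_mem_graded hc (SetLike.prod_pow_mem_graded 𝒜 deg f e fun i _ ↦ hf i)

theorem submonoidClosure_subset_iUnion_gradedMonomials :
    (Submonoid.closure ((𝒜 0 : Set A) ∪ Set.range f) : Set A) ⊆
      ⋃ n, gradedMonomials 𝒜 f deg n := by
  intro x hx
  rw [SetLike.mem_coe, Submonoid.closure_union, Submonoid.mem_sup] at hx
  obtain ⟨c, hc, y, hy, rfl⟩ := hx
  obtain ⟨e, rfl⟩ := Submonoid.mem_closure_range_iff_of_fintype.1 hy
  have hc0 : c ∈ 𝒜 0 :=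
    Submonoid.closure_le (S := SetLike.GradeZero.submonoid 𝒜) |>.2 subset_rfl hc
  exact Set.mem_iUnion.2 ⟨_, c, hc0, e, rfl, rfl⟩

theorem exists_mul_of_mem_gradedMonomials (hf : ∀ i, f i ∈ 𝒜 (deg i)) {d n : ℤ} (hd : 0 < d)
    (hdvd : ∀ i, deg i ∣ d) (hn : d * Fintype.card ι - ∑ i, deg i < n) {x : A}
    (hx : x ∈ gradedMonomials 𝒜 f deg n) :
    ∃ u ∈ 𝒜 d, ∃ v ∈ 𝒜 (n - d), x = u * v := by
  classical
  obtain ⟨c, hc, e, rfl, rfl⟩ := hx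
  obtain ⟨i, k, hk, hkd⟩ := exists_le_mul_eq_of_sum_lt e deg hd hdvd hn
  obtain ⟨e', rfl⟩ : ∃ e' : ι → ℕ, e = e' + Pi.single i k := by
    refine ⟨e - Pi.single i k, (tsub_add_cancel_of_le fun j ↦ ?_).symm⟩
    by_cases hj : j = i
    · subst hj; simpa using hk
    · simp [hj]
  refine ⟨f i ^ k, ?_, c * ∏ j, f j ^ e' j, gradedMonomials_subset hf _ ⟨c, hc, e', ?_, rfl⟩, ?_⟩
  · simpa [← hkd] using SetLike.pow_mem_graded k (hf i)
  · simp [add_mul, Finset.sum_add_distrib, Pi.single_apply, hkd]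
  · simp only [Pi.add_apply, pow_add, Finset.prod_mul_distrib, Pi.single_apply, pow_ite,
      pow_zero, Finset.prod_ite_eq', Finset.mem_univ, if_true]
    ring

end

theorem graded_piece_eq_mul_of_gt_general
    {A : Type*} [CommRing A] (𝒜 : ℤ → AddSubgroup A) [GradedRing 𝒜]
    (p : ℕ) (f : Fin p → A) (deg : Fin p → ℤ)
    (hf : ∀ i, f i ∈ 𝒜 (deg i))
    -- `A_{≥0}` is generated over `A₀` by the `fᵢ`:
    (hgen : ∀ n : ℤ, 0 ≤ n → ∀ a ∈ 𝒜 n,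
      a ∈ Subring.closure ((𝒜 0 : Set A) ∪ Set.range f))
    (d : ℤ) (hd : 0 < d) (hdvd : ∀ i, deg i ∣ d)
    (N : ℤ) (hN : d * p - ∑ i, deg i < N) :
    -- `A_N = A_d · A_{N-d}`:
    ∀ a ∈ 𝒜 N, a ∈ AddSubgroup.closure
      {x : A | ∃ u ∈ 𝒜 d, ∃ v ∈ 𝒜 (N - d), x = u * v} := by
  intro a ha
  have hN0 : 0 ≤ N := by
    have hsum : ∑ i, deg i ≤ ∑ _i : Fin p, d :=
      Finset.sum_le_sum fun i _ ↦ Int.le_of_dvd hd (hdvd i)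
    rw [Finset.sum_const, Finset.card_univ, Fintype.card_fin, nsmul_eq_mul] at hsum
    linarith
  have ha' : a ∈ AddSubgroup.closure (⋃ n, gradedMonomials 𝒜 f deg n) :=
    AddSubgroup.closure_mono submonoidClosure_subset_iUnion_gradedMonomials
      (Subring.mem_closure_iff.1 (hgen N hN0 a ha))
  refine AddSubgroup.closure_mono (fun x hx ↦ ?_)
    (GradedRing.mem_closure_of_mem_closure_iUnion 𝒜 (gradedMonomials_subset hf) ha' ha)
  exact exists_mul_of_mem_gradedMonomials hf hd hdvd (by simpa using hN) hx

theorem graded_piece_eq_mul_of_gt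
    {A : Type*} [CommRing A] (𝒜 : ℤ → AddSubgroup A) [GradedRing 𝒜]
    (p : ℕ) (f : Fin p → A) (deg : Fin p → ℤ)
    (hdegpos : ∀ i, 0 < deg i)
    (hf : ∀ i, f i ∈ 𝒜 (deg i))
    -- `A_{≥0}` is generated over `A₀` by the `fᵢ`:
    (hgen : ∀ n : ℤ, 0 ≤ n → ∀ a ∈ 𝒜 n,
      a ∈ Subring.closure ((𝒜 0 : Set A) ∪ Set.range f))
    (d : ℤ) (hd : 0 < d) (hdvd : ∀ i, deg i ∣ d)
    (N : ℤ) (hN : d * p - ∑ i, deg i < N) :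
    -- `A_N = A_d · A_{N-d}`:
    ∀ a ∈ 𝒜 N, a ∈ AddSubgroup.closure
      {x : A | ∃ u ∈ 𝒜 d, ∃ v ∈ 𝒜 (N - d), x = u * v} :=
  graded_piece_eq_mul_of_gt_general 𝒜 p f deg hf hgen d hd hdvd N hN
end

section
/- Let A be a commutative ℤ-graded ring whose non-negative part A_{≥0} is generated as an A₀-algebra by homogeneous elements f₁,…,f_p of positive degrees d₁,…,d_p, and let d > 0 be divisible by each dᵢ. Let I⁺ be the (two-sided) ideal of A generated by all elements of positive degree. Then for a homogeneous element x of a graded A-module M, the following are equivalent: (1) for every f ∈ I⁺ there exists n > 0 with fⁿx = 0 (equivalently, (I⁺)ⁿ x = 0 for some n); (2) x · (A_d)ⁿ = 0 for all sufficiently large n; (3) x · A_{≥s} = 0 for some integer s, where A_{≥s} = ⊕_{n≥s} A_n. -/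
open DirectSum Pointwise

section Aux

variable {A : Type*} [CommRing A] (𝒜 : ℤ → AddSubgroup A) [GradedRing 𝒜]

lemma aux_prod_pow_mem_graded {p : ℕ} (f : Fin p → A) (deg : Fin p → ℤ)
    (hf : ∀ i, f i ∈ 𝒜 (deg i)) (α : Fin p → ℕ) (s : Finset (Fin p)) :
    (∏ i ∈ s, f i ^ α i) ∈ 𝒜 (∑ i ∈ s, (α i : ℤ) * deg i) := by
  classical
  induction s using Finset.induction with
  | empty => simpa using SetLike.one_mem_graded 𝒜
  | @insert j s hj ih =>
    rw [Finset.prod_insert hj, Finset.sum_insert hj]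
    refine SetLike.mul_mem_graded ?_ ih
    have := SetLike.pow_mem_graded (α j) (hf j)
    simpa [zsmul_eq_mul, nsmul_eq_mul] using this

lemma aux_prod_pow_mem_pow {p : ℕ} (I : Ideal A) (g : Fin p → A)
    (hg : ∀ i, g i ∈ I) (q : Fin p → ℕ) (s : Finset (Fin p)) :
    (∏ i ∈ s, g i ^ q i) ∈ I ^ (∑ i ∈ s, q i) := by
  classical
  induction s using Finset.induction with
  | empty => simp [Ideal.one_eq_top]
  | @insert j s hj ih =>
    rw [Finset.prod_insert hj, Finset.sum_insert hj, pow_add]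
    exact Ideal.mul_mem_mul (Ideal.pow_mem_pow (hg _) _) ih

/-- Every nonnegative-degree homogeneous element is an integer combination of
monomials `c * ∏ f i ^ α i` of the same degree. -/
lemma aux_mem_closure_mon {p : ℕ} (f : Fin p → A) (deg : Fin p → ℤ)
    (hf : ∀ i, f i ∈ 𝒜 (deg i))
    (hgen : ∀ n : ℤ, 0 ≤ n → ∀ a ∈ 𝒜 n,
      a ∈ Subring.closure ((𝒜 0 : Set A) ∪ Set.range f))
    (n : ℤ) (hn : 0 ≤ n) (a : A) (ha : a ∈ 𝒜 n) :
    a ∈ AddSubgroup.closure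
      {b : A | ∃ c ∈ 𝒜 0, ∃ α : Fin p → ℕ,
        (∑ i, (α i : ℤ) * deg i) = n ∧ b = c * ∏ i, f i ^ α i} := by
  classical
  set MonAll : Set A :=
    {b : A | ∃ c ∈ 𝒜 0, ∃ α : Fin p → ℕ, b = c * ∏ i, f i ^ α i} with hMA
  have one_mem' : (1 : A) ∈ MonAll := ⟨1, SetLike.one_mem_graded 𝒜, 0, by simp⟩
  have mul_mem' : ∀ {u v : A}, u ∈ MonAll → v ∈ MonAll → u * v ∈ MonAll := by
    rintro u v ⟨c, hc, α, rfl⟩ ⟨c', hc', β, rfl⟩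
    refine ⟨c * c', by simpa using SetLike.mul_mem_graded hc hc', α + β, ?_⟩
    have : (∏ i, f i ^ (α + β) i) = (∏ i, f i ^ α i) * ∏ i, f i ^ β i := by
      rw [← Finset.prod_mul_distrib]
      exact Finset.prod_congr rfl fun i _ => by simp [pow_add]
    rw [this]; ring
  let Msub : Submonoid A := ⟨⟨MonAll, fun h h' => mul_mem' h h'⟩, one_mem'⟩
  have h1 : a ∈ AddSubgroup.closure MonAll := by
    have h := hgen n hn a ha
    rw [Subring.mem_closure_iff] at h
    refine AddSubgroup.closure_mono ?_ h
    have hle : Submonoid.closure ((𝒜 0 : Set A) ∪ Set.range f) ≤ Msub := by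
      rw [Submonoid.closure_le]
      rintro b (hb | ⟨i, rfl⟩)
      · exact ⟨b, hb, 0, by simp⟩
      · refine ⟨1, SetLike.one_mem_graded 𝒜, Pi.single i 1, ?_⟩
        rw [one_mul, Finset.prod_eq_single i
          (fun j _ hj => by rw [Pi.single_eq_of_ne hj, pow_zero])
          (fun hi => absurd (Finset.mem_univ i) hi)]
        rw [Pi.single_eq_same, pow_one]
    exact fun b hb => hle hb
  have ha' : GradedRing.proj 𝒜 n a = a := by
    rw [GradedRing.proj_apply, DirectSum.decompose_of_mem_same 𝒜 ha]
  rw [← ha']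
  have h2 : GradedRing.proj 𝒜 n a ∈
      AddSubgroup.map (GradedRing.proj 𝒜 n) (AddSubgroup.closure MonAll) :=
    AddSubgroup.mem_map_of_mem _ h1
  rw [AddMonoidHom.map_closure] at h2
  refine (AddSubgroup.closure_le _).2 ?_ h2
  rintro _ ⟨b, ⟨c, hc, α, rfl⟩, rfl⟩
  have hmem : c * ∏ i, f i ^ α i ∈ 𝒜 (∑ i, (α i : ℤ) * deg i) := by
    simpa using SetLike.mul_mem_graded hc
      (aux_prod_pow_mem_graded 𝒜 f deg hf α Finset.univ)
  by_cases hS : (∑ i, (α i : ℤ) * deg i) = n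
  · have : GradedRing.proj 𝒜 n (c * ∏ i, f i ^ α i) = c * ∏ i, f i ^ α i := by
      rw [GradedRing.proj_apply, DirectSum.decompose_of_mem_same 𝒜 (hS ▸ hmem)]
    rw [SetLike.mem_coe, this]
    exact AddSubgroup.subset_closure ⟨c, hc, α, hS, rfl⟩
  · have : GradedRing.proj 𝒜 n (c * ∏ i, f i ^ α i) = 0 := by
      rw [GradedRing.proj_apply, DirectSum.decompose_of_mem_ne 𝒜 hmem hS]
    rw [SetLike.mem_coe, this]
    exact zero_mem _

end Aux

theorem torsion_element_tfae
    {A : Type*} [CommRing A] (𝒜 : ℤ → AddSubgroup A) [GradedRing 𝒜]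
    {M : Type*} [AddCommGroup M] [Module A M]
    (ℳ : ℤ → AddSubgroup M) [DirectSum.Decomposition ℳ] [SetLike.GradedSMul 𝒜 ℳ]
    (p : ℕ) (f : Fin p → A) (deg : Fin p → ℤ)
    (hdegpos : ∀ i, 0 < deg i)
    (hf : ∀ i, f i ∈ 𝒜 (deg i))
    -- `A_{≥0}` is generated over `A₀` by the `fᵢ`:
    (hgen : ∀ n : ℤ, 0 ≤ n → ∀ a ∈ 𝒜 n,
      a ∈ Subring.closure ((𝒜 0 : Set A) ∪ Set.range f))
    (d : ℤ) (hd : 0 < d) (hdvd : ∀ i, deg i ∣ d)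
    (x : M) (m : ℤ) (hx : x ∈ ℳ m) :
    List.TFAE
      [ -- (1) `x` is `(I⁺)^∞`-torsion:
        ∀ g ∈ Ideal.span {a : A | ∃ n : ℤ, 0 < n ∧ a ∈ 𝒜 n},
          ∃ n : ℕ, 0 < n ∧ g ^ n • x = 0,
        -- (2) `x · (A_d)ⁿ = 0` for all sufficiently large `n`:
        ∃ N : ℕ, ∀ n : ℕ, N ≤ n →
          ∀ a ∈ (Ideal.span (𝒜 d : Set A)) ^ n, a • x = 0,
        -- (3) `x · A_{≥s} = 0` for some `s`:
        ∃ s : ℤ, ∀ n : ℤ, s ≤ n → ∀ a ∈ 𝒜 n, a • x = 0 ] := by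
  classical
  tfae_have 1 → 3 := by
    intro h1
    have hfI : ∀ i, f i ∈ Ideal.span {a : A | ∃ n : ℤ, 0 < n ∧ a ∈ 𝒜 n} :=
      fun i => Ideal.subset_span ⟨deg i, hdegpos i, hf i⟩
    choose k hkpos hfk using fun i => h1 (f i) (hfI i)
    refine ⟨1 + ∑ i, (k i : ℤ) * deg i, fun n hn a ha => ?_⟩
    have hsum0 : (0 : ℤ) ≤ ∑ i, (k i : ℤ) * deg i :=
      Finset.sum_nonneg fun i _ => mul_nonneg (Int.natCast_nonneg _) (hdegpos i).le
    have hn0 : 0 ≤ n := by linarith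
    have hcl := aux_mem_closure_mon 𝒜 f deg hf hgen n hn0 a ha
    have hsub : AddSubgroup.closure
        {b : A | ∃ c ∈ 𝒜 0, ∃ α : Fin p → ℕ,
          (∑ i, (α i : ℤ) * deg i) = n ∧ b = c * ∏ i, f i ^ α i} ≤
        (Ideal.torsionOf A M x).toAddSubgroup := by
      rw [AddSubgroup.closure_le]
      rintro b ⟨c, hc, α, hS, rfl⟩
      have hex : ∃ i, k i ≤ α i := by
        by_contra hcon
        push_neg at hcon
        have hle : n ≤ ∑ i, ((k i : ℤ) - 1) * deg i := by
          rw [← hS]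
          refine Finset.sum_le_sum fun i _ => ?_
          have : (α i : ℤ) ≤ (k i : ℤ) - 1 := by
            have := hcon i; omega
          exact mul_le_mul_of_nonneg_right this (hdegpos i).le
        have hlt : ∑ i, ((k i : ℤ) - 1) * deg i ≤ ∑ i, (k i : ℤ) * deg i := by
          refine Finset.sum_le_sum fun i _ => ?_
          exact mul_le_mul_of_nonneg_right (by linarith) (hdegpos i).le
        linarith
      obtain ⟨i, hki⟩ := hex
      rw [SetLike.mem_coe, Submodule.mem_toAddSubgroup, Ideal.mem_torsionOf_iff]
      have hbeq : c * ∏ j, f j ^ α j =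
          (c * f i ^ (α i - k i) * ∏ j ∈ Finset.univ.erase i, f j ^ α j) *
            f i ^ k i := by
        rw [← Finset.mul_prod_erase Finset.univ _ (Finset.mem_univ i)]
        have : f i ^ α i = f i ^ (α i - k i) * f i ^ k i := by
          rw [← pow_add, Nat.sub_add_cancel hki]
        rw [this]; ring
      rw [hbeq, mul_smul, hfk i, smul_zero]
    have := hsub hcl
    rwa [Submodule.mem_toAddSubgroup, Ideal.mem_torsionOf_iff] at this
  tfae_have 3 → 2 := by
    rintro ⟨s, hs⟩
    refine ⟨max s.toNat 1, fun n hn a haI => ?_⟩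
    have hn1 : 1 ≤ n := le_trans (le_max_right _ _) hn
    have h1 : ∀ k : ℕ, 1 ≤ k →
        (Ideal.span (𝒜 d : Set A)) ^ k ≤ Ideal.span (𝒜 ((k : ℤ) * d) : Set A) := by
      intro k
      induction k with
      | zero => exact fun h => absurd h (by omega)
      | succ k ih =>
        intro hk
        rcases Nat.eq_zero_or_pos k with rfl | hkpos
        · simpa using le_refl _
        · rw [pow_succ]
          calc (Ideal.span (𝒜 d : Set A)) ^ k * Ideal.span (𝒜 d : Set A)
              ≤ Ideal.span (𝒜 ((k : ℤ) * d) : Set A) * Ideal.span (𝒜 d : Set A) :=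
                Ideal.mul_mono_left (ih hkpos)
            _ = Ideal.span ((𝒜 ((k : ℤ) * d) : Set A) * (𝒜 d : Set A)) :=
                Ideal.span_mul_span' _ _
            _ ≤ Ideal.span (𝒜 (((k : ℕ) + 1 : ℤ) * d) : Set A) := by
                refine Ideal.span_mono ?_
                rw [Set.mul_subset_iff]
                intro u hu v hv
                have := SetLike.mul_mem_graded hu hv
                have heq : (k : ℤ) * d + d = ((k : ℕ) + 1 : ℤ) * d := by ring
                rw [heq] at this
                exact this
            _ = Ideal.span (𝒜 (((k + 1 : ℕ) : ℤ) * d) : Set A) := by push_cast; ring_nf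
    have h2 : Ideal.span (𝒜 ((n : ℤ) * d) : Set A) ≤ Ideal.torsionOf A M x := by
      rw [Ideal.span_le]
      intro b hb
      rw [SetLike.mem_coe, Ideal.mem_torsionOf_iff]
      refine hs _ ?_ b hb
      have h3 : (s : ℤ) ≤ (s.toNat : ℤ) := Int.self_le_toNat s
      have h4 : (s.toNat : ℤ) ≤ (n : ℤ) := by
        exact_mod_cast le_trans (le_max_left _ _) hn
      have h5 : (n : ℤ) * 1 ≤ (n : ℤ) * d :=
        mul_le_mul_of_nonneg_left hd (Int.natCast_nonneg n)
      linarith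
    have := h2 (h1 n hn1 haI)
    rwa [Ideal.mem_torsionOf_iff] at this
  tfae_have 2 → 1 := by
    rintro ⟨N, hN⟩ g hg
    have key : {a : A | ∃ n : ℤ, 0 < n ∧ a ∈ 𝒜 n} ⊆
        ((Ideal.torsionOf A M x).radical : Set A) := by
      rintro a ⟨t, ht, hat⟩
      set K : ℕ := (((N : ℤ) + p) * d).toNat + 1 with hK
      have haK : a ^ K ∈ 𝒜 ((K : ℤ) * t) := by
        have := SetLike.pow_mem_graded K hat
        simpa [nsmul_eq_mul] using this
      have hKt0 : (0 : ℤ) ≤ (K : ℤ) * t :=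
        mul_nonneg (Int.natCast_nonneg _) ht.le
      refine ⟨K, ?_⟩
      rw [Ideal.mem_torsionOf_iff]
      have hcl := aux_mem_closure_mon 𝒜 f deg hf hgen _ hKt0 _ haK
      have hsub : AddSubgroup.closure
          {b : A | ∃ c ∈ 𝒜 0, ∃ α : Fin p → ℕ,
            (∑ i, (α i : ℤ) * deg i) = (K : ℤ) * t ∧ b = c * ∏ i, f i ^ α i} ≤
          ((Ideal.span (𝒜 d : Set A)) ^ N).toAddSubgroup := by
        rw [AddSubgroup.closure_le]
        rintro b ⟨c, hc, α, hS, rfl⟩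
        rw [SetLike.mem_coe, Submodule.mem_toAddSubgroup]
        -- divide each exponent
        set e : Fin p → ℕ := fun i => (d / deg i).toNat with he
        have hei : ∀ i, (e i : ℤ) * deg i = d := by
          intro i
          have h0 : (0 : ℤ) ≤ d / deg i :=
            Int.ediv_nonneg hd.le (hdegpos i).le
          rw [he]; simp only
          rw [Int.toNat_of_nonneg h0, Int.ediv_mul_cancel (hdvd i)]
        have hepos : ∀ i, 0 < e i := by
          intro i
          rcases Nat.eq_zero_or_pos (e i) with h0 | h
          · exfalso
            have h2 := hei i
            rw [h0] at h2
            simp at h2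
            omega
          · exact h
        set q : Fin p → ℕ := fun i => α i / e i with hq
        set r : Fin p → ℕ := fun i => α i % e i with hr
        have hprod : (∏ i, f i ^ α i) =
            (∏ i, (f i ^ e i) ^ q i) * ∏ i, f i ^ r i := by
          rw [← Finset.prod_mul_distrib]
          refine Finset.prod_congr rfl fun i _ => ?_
          rw [← pow_mul, ← pow_add]
          congr 1
          simp only [hq, hr]
          exact (Nat.div_add_mod (α i) (e i)).symm
        -- sum identity over ℤ
        have hterm : ∀ i, (α i : ℤ) * deg i = (q i : ℤ) * d + (r i : ℤ) * deg i := by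
          intro i
          have h1 : (α i : ℤ) = (e i : ℤ) * q i + r i := by
            simp only [hq, hr]
            exact_mod_cast (Nat.div_add_mod (α i) (e i)).symm
          calc (α i : ℤ) * deg i = ((e i : ℤ) * q i + r i) * deg i := by rw [h1]
            _ = (q i : ℤ) * ((e i : ℤ) * deg i) + (r i : ℤ) * deg i := by ring
            _ = (q i : ℤ) * d + (r i : ℤ) * deg i := by rw [hei i]
        have hsum : (∑ i, (q i : ℤ)) * d + ∑ i, (r i : ℤ) * deg i = (K : ℤ) * t := by
          rw [← hS]
          rw [Finset.sum_congr rfl fun i _ => hterm i, Finset.sum_add_distrib,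
            ← Finset.sum_mul]
        have hrbound : ∑ i, (r i : ℤ) * deg i ≤ (p : ℤ) * d := by
          calc ∑ i, (r i : ℤ) * deg i ≤ ∑ _i : Fin p, d := by
                refine Finset.sum_le_sum fun i _ => ?_
                have hri : (r i : ℤ) ≤ (e i : ℤ) - 1 := by
                  have := Nat.mod_lt (α i) (hepos i)
                  rw [hr]; simp only; omega
                calc (r i : ℤ) * deg i ≤ ((e i : ℤ) - 1) * deg i :=
                      mul_le_mul_of_nonneg_right hri (hdegpos i).le
                  _ = d - deg i := by rw [sub_mul, one_mul, hei i]
                  _ ≤ d := by linarith [hdegpos i]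
            _ = (p : ℤ) * d := by simp [mul_comm]
        have hKbig : ((N : ℤ) + p) * d + 1 ≤ (K : ℤ) * t := by
          have h6 : ((N : ℤ) + p) * d ≤ ((((N : ℤ) + p) * d).toNat : ℤ) :=
            Int.self_le_toNat _
          have h7 : (K : ℤ) = ((((N : ℤ) + p) * d).toNat : ℤ) + 1 := by
            rw [hK]; push_cast; ring
          have h8 : (K : ℤ) * 1 ≤ (K : ℤ) * t :=
            mul_le_mul_of_nonneg_left ht (Int.natCast_nonneg K)
          linarith
        have hNq : N ≤ ∑ i, q i := by
          have hcast : ((∑ i, q i : ℕ) : ℤ) = ∑ i, (q i : ℤ) := by push_cast; ring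
          have : (N : ℤ) * d < (∑ i, (q i : ℤ)) * d := by linarith
          have := lt_of_mul_lt_mul_right this hd.le
          exact_mod_cast le_of_lt (by rw [← hcast] at this; exact_mod_cast this)
        -- now membership
        have hgmem : ∀ i, f i ^ e i ∈ Ideal.span (𝒜 d : Set A) := by
          intro i
          refine Ideal.subset_span ?_
          have := SetLike.pow_mem_graded (e i) (hf i)
          have heq : (e i) • deg i = d := by
            rw [← hei i]; simp [nsmul_eq_mul]
          rw [heq] at this
          exact this
        have hbig : (∏ i, (f i ^ e i) ^ q i) ∈
            (Ideal.span (𝒜 d : Set A)) ^ (∑ i, q i) :=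
          aux_prod_pow_mem_pow _ _ hgmem q Finset.univ
        have hfin : (∏ i, (f i ^ e i) ^ q i) ∈ (Ideal.span (𝒜 d : Set A)) ^ N :=
          Ideal.pow_le_pow_right hNq hbig
        rw [hprod]
        have : c * ((∏ i, (f i ^ e i) ^ q i) * ∏ i, f i ^ r i) =
            (c * ∏ i, f i ^ r i) * ∏ i, (f i ^ e i) ^ q i := by ring
        rw [this]
        exact Ideal.mul_mem_left _ _ hfin
      have hmem := hsub hcl
      rw [Submodule.mem_toAddSubgroup] at hmem
      exact hN N le_rfl _ hmem
    have hrad : g ∈ (Ideal.torsionOf A M x).radical :=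
      (Ideal.span_le.2 key) hg
    obtain ⟨n, hn⟩ := hrad
    rcases Nat.eq_zero_or_pos n with rfl | hpos
    · rw [pow_zero, Ideal.mem_torsionOf_iff, one_smul] at hn
      exact ⟨1, one_pos, by rw [pow_one, hn, smul_zero]⟩
    · exact ⟨n, hpos, by rwa [Ideal.mem_torsionOf_iff] at hn⟩
  tfae_finish
end

section
/- Let A be a commutative ring and I ⊆ A an ideal. If an A-module M is I-adically complete (the natural map M → lim_n M/IⁿM is bijective), then M is derived complete with respect to I, i.e., for every f ∈ I, Hom_A(A_f, M) = 0 and Ext¹_A(A_f, M) = 0. -/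
/-!
The telescope `0 → A^(ℕ) → A^(ℕ) → A_f → 0`, where the first map sends `e n` to
`e n - f • e (n + 1)` and the second sends `e n` to `1 / f ^ n`, is a projective resolution of
`A_f`. Hence `Ext¹(A_f, M)` is the cokernel of `φ ↦ φ ∘ d` on `Hom(A^(ℕ), M) = M^ℕ`, i.e. it
vanishes iff every system `m n - f • m (n + 1) = b n` is solvable; for `f ∈ I` the `I`-adically
convergent series `m n = ∑ₖ fᵏ • b (n + k)` solves it. A map `A_f → M` takes values divisible by
every power of `f`, which lie in `⋂ₖ Iᵏ M = 0`.
-/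

open CategoryTheory Limits ZeroObject IsLocalization.Away

noncomputable section

namespace CategoryTheory.ShortComplex

variable {C : Type*} [Category C] [Abelian C] (S : ShortComplex C)

def lengthOneX : ℕ → C
  | 0 => S.X₂
  | 1 => S.X₁
  | _ + 2 => 0

def lengthOneD : ∀ n : ℕ, S.lengthOneX (n + 1) ⟶ S.lengthOneX n
  | 0 => S.f
  | _ + 1 => 0

def lengthOneComplex : ChainComplex C ℕ :=
  ChainComplex.of S.lengthOneX S.lengthOneD fun _ => zero_comp

lemma lengthOneComplex_d_one_zero : S.lengthOneComplex.d 1 0 = S.f := by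
  unfold lengthOneComplex; exact ChainComplex.of_d S.lengthOneX S.lengthOneD 0

namespace ShortExact

variable {S}

lemma lengthOneComplex_exactAt_succ (hS : S.ShortExact) (n : ℕ) :
    S.lengthOneComplex.ExactAt (n + 1) := by
  rw [HomologicalComplex.exactAt_iff' _ (n + 2) (n + 1) n (by simp) (by simp)]
  cases n with
  | zero =>
    rw [exact_iff_mono _ (IsZero.eq_of_src (isZero_zero C) _ _)]
    change Mono (S.lengthOneComplex.d 1 0)
    rw [lengthOneComplex_d_one_zero]
    exact hS.mono_f
  | succ n => exact exact_of_isZero_X₂ _ (isZero_zero C)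

def projectiveResolution (hS : S.ShortExact) [Projective S.X₁] [Projective S.X₂] :
    ProjectiveResolution S.X₃ where
  complex := S.lengthOneComplex
  projective
    | 0 => inferInstanceAs (Projective S.X₂)
    | 1 => inferInstanceAs (Projective S.X₁)
    | _ + 2 => inferInstanceAs (Projective (0 : C))
  π := (ChainComplex.toSingle₀Equiv _ _).symm
    ⟨S.g, by rw [lengthOneComplex_d_one_zero]; exact S.zero⟩
  quasiIso := ⟨fun n => by
    cases n with
    | zero =>
      rw [ChainComplex.quasiIsoAt₀_iff, ShortComplex.quasiIso_iff_of_zeros' _ rfl rfl rfl]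
      refine (exact_and_epi_g_iff_of_iso ?_).1 ⟨hS.exact, hS.epi_g⟩
      refine isoMk (Iso.refl _) (Iso.refl _) (Iso.refl _) ?_ ?_
      · exact (Category.id_comp _).trans
          ((lengthOneComplex_d_one_zero S).trans (Category.comp_id _).symm)
      · exact (Category.id_comp _).trans
          ((ChainComplex.toSingle₀Equiv_symm_apply_f_zero _ _).trans (Category.comp_id _).symm)
    | succ n =>
      rw [quasiIsoAt_iff_exactAt' _ _ (ChainComplex.exactAt_succ_single_obj _ _)]
      exact hS.lengthOneComplex_exactAt_succ n⟩

lemma isZero_Ext_one_of_surjective_comp {R : Type*} [Ring R] [Linear R C] [EnoughProjectives C]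
    (hS : S.ShortExact) [Projective S.X₁] [Projective S.X₂] (Y : C)
    (hY : Function.Surjective fun g : S.X₂ ⟶ Y => S.f ≫ g) :
    IsZero (((Ext R C 1).obj (Opposite.op S.X₃)).obj Y) := by
  refine IsZero.of_iso ?_ (hS.projectiveResolution.isoExt 1 Y)
  rw [← HomologicalComplex.exactAt_iff_isZero_homology,
    HomologicalComplex.exactAt_iff' _ 0 1 2 (by simp) (by simp), moduleCat_exact_iff]
  intro g _
  obtain ⟨g', hg'⟩ := hY g
  refine ⟨g', ?_⟩
  simp only [projectiveResolution, HomologicalComplex.shortComplexFunctor'_obj_f,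
    ChainComplex.linearYonedaObj_d, lengthOneComplex_d_one_zero]
  exact hg'

end ShortExact
end CategoryTheory.ShortComplex

section Adic

variable {A M : Type*} [CommRing A] [AddCommGroup M] [Module A M] {I : Ideal A}

lemma IsHausdorff.eq_zero_of_forall_exists_pow_smul_eq [IsHausdorff I M] {f : A} (hf : f ∈ I)
    {x : M} (hx : ∀ k : ℕ, ∃ y : M, f ^ k • y = x) : x = 0 := by
  refine IsHausdorff.haus ‹_› x fun k => ?_
  obtain ⟨y, rfl⟩ := hx k
  rw [SModEq.zero]
  exact Submodule.smul_mem_smul (Ideal.pow_mem_pow hf k) Submodule.mem_top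

lemma IsPrecomplete.exists_forall_sum_range_smodEq [IsPrecomplete I M] {x : ℕ → M}
    (hx : ∀ k, x k ∈ I ^ k • (⊤ : Submodule A M)) :
    ∃ m : M, ∀ j, ∑ k ∈ Finset.range j, x k ≡ m [SMOD I ^ j • (⊤ : Submodule A M)] := by
  refine IsPrecomplete.prec ‹_› fun {p q} hpq => ?_
  rw [SModEq.sub_mem, ← Finset.sum_range_add_sum_Ico _ hpq, sub_add_cancel_left]
  exact neg_mem (Submodule.sum_mem _ fun k hk =>
    Submodule.smul_mono_left (Ideal.pow_le_pow_right (Finset.mem_Ico.1 hk).1) (hx k))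

lemma IsAdicComplete.exists_sub_smul_succ_eq [IsAdicComplete I M] {f : A} (hf : f ∈ I)
    (b : ℕ → M) : ∃ m : ℕ → M, ∀ n, m n - f • m (n + 1) = b n := by
  have hx (n k : ℕ) : f ^ k • b (n + k) ∈ I ^ k • (⊤ : Submodule A M) :=
    Submodule.smul_mem_smul (Ideal.pow_mem_pow hf k) Submodule.mem_top
  choose m hm using fun n => IsPrecomplete.exists_forall_sum_range_smodEq (hx n)
  refine ⟨m, fun n => sub_eq_iff_eq_add.2 <| (IsHausdorff.eq_iff_smodEq (I := I)).2 fun j => ?_⟩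
  have hsum : ∑ k ∈ Finset.range (j + 1), f ^ k • b (n + k) =
      b n + f • ∑ k ∈ Finset.range j, f ^ k • b (n + 1 + k) := by
    rw [Finset.sum_range_succ', Finset.smul_sum, add_comm]
    simp only [smul_smul, ← pow_succ', add_assoc, add_comm 1, pow_zero, one_smul, add_zero]
  calc m n ≡ ∑ k ∈ Finset.range (j + 1), f ^ k • b (n + k) [SMOD I ^ j • (⊤ : Submodule A M)] :=
        ((hm n (j + 1)).mono (Submodule.smul_mono_left (Ideal.pow_le_pow_right j.le_succ))).symm
    _ = b n + f • ∑ k ∈ Finset.range j, f ^ k • b (n + 1 + k) := hsum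
    _ ≡ b n + f • m (n + 1) [SMOD I ^ j • (⊤ : Submodule A M)] :=
        SModEq.rfl.add ((hm (n + 1) j).smul f)

end Adic

namespace IsLocalization.Away

variable {A S : Type*} [CommRing A] {f : A} [CommRing S] [Algebra A S] [IsLocalization.Away f S]

lemma pow_smul_invSelf_pow (k : ℕ) : f ^ k • invSelf (S := S) f ^ k = 1 := by
  rw [Algebra.smul_def, map_pow, ← mul_pow, mul_invSelf, one_pow]

lemma smul_invSelf_pow_succ (n : ℕ) : f • invSelf (S := S) f ^ (n + 1) = invSelf f ^ n := by
  rw [pow_succ', ← smul_mul_assoc, Algebra.smul_def, mul_invSelf, one_mul]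

lemma linearMap_eq_zero_of_isHausdorff {M : Type*} [AddCommGroup M] [Module A M] {I : Ideal A}
    [IsHausdorff I M] (hf : f ∈ I) (g : S →ₗ[A] M) : g = 0 :=
  LinearMap.ext fun x => IsHausdorff.eq_zero_of_forall_exists_pow_smul_eq hf fun k =>
    ⟨g (invSelf f ^ k * x), by rw [← map_smul, ← smul_mul_assoc, pow_smul_invSelf_pow, one_mul]⟩

end IsLocalization.Away

namespace Telescope

section

variable {A : Type*} [CommRing A] (f : A)

def diff : (ℕ →₀ A) →ₗ[A] (ℕ →₀ A) :=
  LinearMap.id - f • Finsupp.lmapDomain A A (· + 1)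

variable (S : Type*) [CommRing S] [Algebra A S] [IsLocalization.Away f S]

def aug : (ℕ →₀ A) →ₗ[A] S :=
  Finsupp.linearCombination A fun n => invSelf (S := S) f ^ n

variable {f S}

lemma diff_single (n : ℕ) (a : A) :
    diff f (Finsupp.single n a) = Finsupp.single n a - Finsupp.single (n + 1) (f * a) := by
  simp [diff, Finsupp.mapDomain_single]

lemma diff_apply_zero (c : ℕ →₀ A) : diff f c 0 = c 0 := by
  have : Finsupp.mapDomain (· + 1) c 0 = 0 := Finsupp.mapDomain_of_notMem_range _ _ (by simp)
  simp [diff, this]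

lemma diff_apply_succ (c : ℕ →₀ A) (j : ℕ) : diff f c (j + 1) = c (j + 1) - f * c j := by
  have : Finsupp.mapDomain (· + 1) c (j + 1) = c j :=
    Finsupp.mapDomain_apply (add_left_injective 1) _ _
  simp [diff, this]

lemma diff_injective : Function.Injective (diff f) := by
  refine (injective_iff_map_eq_zero _).2 fun c hc => Finsupp.ext fun j => ?_
  induction j with
  | zero => rw [← diff_apply_zero (f := f), hc, Finsupp.zero_apply]
  | succ j ih => simpa [hc, ih, sub_eq_zero, eq_comm] using diff_apply_succ (f := f) c j

lemma single_sub_single_mem_range_diff (n k : ℕ) (a : A) :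
    Finsupp.single n a - Finsupp.single (n + k) (f ^ k * a) ∈ LinearMap.range (diff f) := by
  induction k with
  | zero => simp
  | succ k ih =>
    have h := add_mem ih (LinearMap.mem_range_self (diff f) (Finsupp.single (n + k) (f ^ k * a)))
    rw [diff_single, ← mul_assoc, ← pow_succ', sub_add_sub_cancel] at h
    exact h

lemma exists_sub_single_mem_range_diff (c : ℕ →₀ A) :
    ∃ N b, c - Finsupp.single N b ∈ LinearMap.range (diff f) := by
  induction c using Finsupp.induction_linear with
  | zero => exact ⟨0, 0, by simp⟩
  | single n a => exact ⟨n, a, by simp⟩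
  | add c c' hc hc' =>
    obtain ⟨N, b, hb⟩ := hc
    obtain ⟨N', b', hb'⟩ := hc'
    have h := single_sub_single_mem_range_diff (f := f) N N' b
    have h' := single_sub_single_mem_range_diff (f := f) N' N b'
    rw [add_comm N' N] at h'
    refine ⟨N + N', f ^ N' * b + f ^ N * b', ?_⟩
    convert add_mem (add_mem (add_mem hb hb') h) h' using 1
    rw [Finsupp.single_add]
    abel

lemma aug_single (n : ℕ) (a : A) : aug f S (Finsupp.single n a) = a • invSelf f ^ n :=
  Finsupp.linearCombination_single _ _ _

lemma aug_comp_diff : aug f S ∘ₗ diff f = 0 := by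
  refine Finsupp.lhom_ext fun n a => ?_
  rw [LinearMap.comp_apply, diff_single, map_sub, aug_single, aug_single, mul_comm, mul_smul,
    smul_invSelf_pow_succ, sub_self, LinearMap.zero_apply]

lemma aug_surjective : Function.Surjective (aug f S) := by
  intro x
  obtain ⟨n, a, hx⟩ := surj f x
  refine ⟨Finsupp.single n a, ?_⟩
  rw [aug_single, Algebra.smul_def, ← hx, mul_assoc, ← map_pow, ← Algebra.smul_def,
    pow_smul_invSelf_pow, mul_one]

lemma ker_aug_le_range_diff : LinearMap.ker (aug f S) ≤ LinearMap.range (diff f) := by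
  -- Modulo `range (diff f)`, `c ≡ b • e N`; then `b / f ^ N = aug c = 0` forces `f ^ m * b = 0`,
  -- and `b • e N ≡ (f ^ m * b) • e (N + m) = 0`.
  intro c hc
  obtain ⟨N, b, hb⟩ := exists_sub_single_mem_range_diff (f := f) c
  have hNb : b • invSelf (S := S) f ^ N = 0 := by
    rw [← aug_single, ← sub_sub_cancel c (Finsupp.single N b), map_sub, LinearMap.mem_ker.1 hc,
      LinearMap.mem_ker.1 (LinearMap.range_le_ker_iff.2 aug_comp_diff hb), sub_zero]
  have hb0 : algebraMap A S b = algebraMap A S 0 := by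
    rw [map_zero, ← mul_one (algebraMap A S b), ← pow_smul_invSelf_pow (S := S) (f := f) N,
      ← Algebra.smul_def, smul_comm, hNb, smul_zero]
  obtain ⟨m, hm⟩ := exists_of_eq (S := S) f hb0
  rw [mul_zero] at hm
  have hN := single_sub_single_mem_range_diff (f := f) N m b
  rw [hm, Finsupp.single_zero, sub_zero] at hN
  simpa using add_mem hb hN

lemma exists_comp_diff_eq {M : Type*} [AddCommGroup M] [Module A M] {I : Ideal A}
    [IsAdicComplete I M] (hf : f ∈ I) (ψ : (ℕ →₀ A) →ₗ[A] M) :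
    ∃ φ : (ℕ →₀ A) →ₗ[A] M, φ ∘ₗ diff f = ψ := by
  obtain ⟨m, hm⟩ := IsAdicComplete.exists_sub_smul_succ_eq hf fun n => ψ (Finsupp.single n 1)
  refine ⟨Finsupp.linearCombination A m, Finsupp.lhom_ext' fun n => LinearMap.ext_ring ?_⟩
  simp [diff_single, hm]

end

variable {A : Type u} [CommRing A] (f : A) (S : Type u) [CommRing S] [Algebra A S]
  [IsLocalization.Away f S]

def shortComplex : ShortComplex (ModuleCat.{u} A) :=
  ShortComplex.mk (ModuleCat.ofHom (diff f)) (ModuleCat.ofHom (aug f S))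
    (ModuleCat.hom_ext aug_comp_diff)

instance : Projective (shortComplex f S).X₁ :=
  inferInstanceAs (Projective (ModuleCat.of A (ℕ →₀ A)))

instance : Projective (shortComplex f S).X₂ :=
  inferInstanceAs (Projective (ModuleCat.of A (ℕ →₀ A)))

lemma shortComplex_shortExact : (shortComplex f S).ShortExact :=
  .mk' ((ShortComplex.moduleCat_exact_iff_ker_sub_range _).2 (ker_aug_le_range_diff (S := S)))
    ((ModuleCat.mono_iff_injective _).2 diff_injective)
    ((ModuleCat.epi_iff_surjective _).2 (aug_surjective (S := S)))

end Telescope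

end

theorem derived_complete_of_adic_complete
    {A : Type u} [CommRing A] (I : Ideal A)
    (M : Type u) [AddCommGroup M] [Module A M]
    (hM : IsAdicComplete I M) :
    ∀ f ∈ I,
      (∀ g : Localization.Away f →ₗ[A] M, g = 0) ∧
      Subsingleton
        (((Ext A (ModuleCat.{u} A) 1).obj
            (Opposite.op (ModuleCat.of A (Localization.Away f)))).obj
          (ModuleCat.of A M)) := by
  intro f hf
  have := hM
  refine ⟨linearMap_eq_zero_of_isHausdorff hf, ModuleCat.subsingleton_of_isZero ?_⟩
  refine (Telescope.shortComplex_shortExact f _).isZero_Ext_one_of_surjective_comp _ fun ψ => ?_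
  obtain ⟨φ, hφ⟩ := Telescope.exists_comp_diff_eq hf ψ.hom
  exact ⟨ModuleCat.ofHom φ, ModuleCat.hom_ext hφ⟩
end

section
/- Let C be an abelian category satisfying AB5 (filtered colimits exist and are exact). For any directed system X₀ → X₁ → X₂ → ⋯ of cochain complexes in C, the canonical map from the homotopy colimit hocolim Xₙ := cone(⊕ₙ Xₙ → ⊕ₙ Xₙ), where the map sends x in the n-th summand to (x, −fₙ(x)), to the ordinary (termwise) colimit colim Xₙ, is a quasi-isomorphism. -/
/-!
Since `u` is a monomorphism, `0 → ∐ X → ∐ X → coker u → 0` is a short exact sequence of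
complexes, and the mapping cone of a monomorphism maps quasi-isomorphically onto its cokernel.

The map `u = 1 − shift` is the colimit over `n` of its restrictions
`⨁_{k ≤ n} X_k → ⨁_{k ≤ n+1} X_k`. Each restriction is a monomorphism: it is unitriangular, so a
morphism `a` it kills has components `a₀ = 0` and `a_{k+1} = a_k ≫ f_k`, hence `a = 0`. Complexes
over an AB5 category are again AB5, and there a filtered colimit of monomorphisms is a monomorphism.
-/

open CategoryTheory CategoryTheory.Limits CochainComplex CochainComplex.HomComplex

def Nat.succFunctor : ℕ ⥤ ℕ :=
  Monotone.functor (f := (· + 1)) fun _ _ h => Nat.add_le_add_right h 1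

instance : Nat.succFunctor.Final :=
  (Monotone.final_functor_iff _).2 fun n => ⟨n, Nat.le_succ n⟩

section PartialBiprod

variable {D : Type*} [Category D] [HasZeroMorphisms D] [HasFiniteBiproducts D] (Y : ℕ → D)

noncomputable def partialBiprod : ℕ ⥤ D where
  obj n := ⨁ fun k : Fin (n + 1) => Y k
  map {m n} h := biproduct.desc fun k =>
    biproduct.ι (fun k : Fin (n + 1) => Y k) ⟨k, by have := leOfHom h; omega⟩
  map_id n := by ext; simp
  map_comp _ _ := by ext; simp

noncomputable def partialBiprodι (n : ℕ) (k : Fin (n + 1)) : Y k ⟶ (partialBiprod Y).obj n :=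
  biproduct.ι (fun k : Fin (n + 1) => Y k) k

noncomputable def partialBiprodπ (n : ℕ) (k : Fin (n + 1)) : (partialBiprod Y).obj n ⟶ Y k :=
  biproduct.π (fun k : Fin (n + 1) => Y k) k

variable {Y} in
noncomputable def partialBiprodDesc {n : ℕ} {Z : D} (f : ∀ k : Fin (n + 1), Y k ⟶ Z) :
    (partialBiprod Y).obj n ⟶ Z :=
  biproduct.desc f

@[simp]
lemma partialBiprodι_desc {n : ℕ} {Z : D} (f : ∀ k : Fin (n + 1), Y k ⟶ Z) (k : Fin (n + 1)) :
    partialBiprodι Y n k ≫ partialBiprodDesc f = f k :=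
  biproduct.ι_desc _ _

lemma partialBiprodι_π (n : ℕ) (j k : Fin (n + 1)) :
    partialBiprodι Y n j ≫ partialBiprodπ Y n k =
      if h : j = k then eqToHom (congrArg (fun k : Fin (n + 1) => Y k) h) else 0 :=
  biproduct.ι_π _ _ _

@[simp]
lemma partialBiprodι_map {m n : ℕ} (h : m ⟶ n) (k : Fin (m + 1)) :
    partialBiprodι Y m k ≫ (partialBiprod Y).map h =
      partialBiprodι Y n ⟨k, by have := leOfHom h; omega⟩ :=
  biproduct.ι_desc _ _

variable {Y} in
@[ext]
lemma partialBiprod_hom_ext' {n : ℕ} {Z : D} {a b : (partialBiprod Y).obj n ⟶ Z}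
    (h : ∀ k, partialBiprodι Y n k ≫ a = partialBiprodι Y n k ≫ b) : a = b :=
  biproduct.hom_ext' _ _ h

variable {Y} in
lemma partialBiprod_hom_ext {n : ℕ} {Z : D} {a b : Z ⟶ (partialBiprod Y).obj n}
    (h : ∀ k, a ≫ partialBiprodπ Y n k = b ≫ partialBiprodπ Y n k) : a = b :=
  biproduct.hom_ext _ _ h

variable [HasCoproduct Y]

noncomputable abbrev partialBiprodCocone : Cocone (partialBiprod Y) where
  pt := ∐ Y
  ι.app n := partialBiprodDesc fun k => Sigma.ι Y k
  ι.naturality m n h := by ext; simp [reassoc_of% partialBiprodι_map]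

noncomputable def isColimitPartialBiprodCocone : IsColimit (partialBiprodCocone Y) where
  desc s := Sigma.desc fun n => partialBiprodι Y n (Fin.last n) ≫ s.ι.app n
  fac s n := by
    ext k
    rw [reassoc_of% partialBiprodι_desc, Sigma.ι_desc, ← s.w (homOfLE (Nat.lt_succ_iff.1 k.2)),
      reassoc_of% partialBiprodι_map]
    rfl
  uniq s m hm := Sigma.hom_ext _ _ fun n => by
    rw [Sigma.ι_desc, ← hm, reassoc_of% partialBiprodι_desc]
    rfl

end PartialBiprod

section OneSubShift

variable {D : Type*} [Category D] [Preadditive D] [HasFiniteBiproducts D] {Y : ℕ → D}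
  (g : ∀ n, Y n ⟶ Y (n + 1))

noncomputable def partialOneSubShift (n : ℕ) :
    (partialBiprod Y).obj n ⟶ (partialBiprod Y).obj (n + 1) :=
  partialBiprodDesc fun k =>
    partialBiprodι Y (n + 1) ⟨k, by omega⟩ - g k ≫ partialBiprodι Y (n + 1) ⟨k + 1, by omega⟩

@[simp]
lemma partialBiprodι_partialOneSubShift (n : ℕ) (k : Fin (n + 1)) :
    partialBiprodι Y n k ≫ partialOneSubShift g n =
      partialBiprodι Y (n + 1) ⟨k, by omega⟩ - g k ≫ partialBiprodι Y (n + 1) ⟨k + 1, by omega⟩ :=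
  partialBiprodι_desc _ _ _

lemma partialOneSubShift_π_zero (n : ℕ) :
    partialOneSubShift g n ≫ partialBiprodπ Y (n + 1) ⟨0, by omega⟩ =
      partialBiprodπ Y n ⟨0, by omega⟩ := by
  ext ⟨k, hk⟩
  simp only [reassoc_of% partialBiprodι_partialOneSubShift, Preadditive.sub_comp, Category.assoc,
    partialBiprodι_π, Fin.mk.injEq]
  split_ifs <;> first | omega | contradiction | (subst_vars; simp)

lemma partialOneSubShift_π_succ {n j : ℕ} (hj : j < n) :
    partialOneSubShift g n ≫ partialBiprodπ Y (n + 1) ⟨j + 1, by omega⟩ =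
      partialBiprodπ Y n ⟨j + 1, by omega⟩ - partialBiprodπ Y n ⟨j, by omega⟩ ≫ g j := by
  ext ⟨k, hk⟩
  simp only [reassoc_of% partialBiprodι_partialOneSubShift, Preadditive.sub_comp, Category.assoc,
    Preadditive.comp_sub, partialBiprodι_π, reassoc_of% partialBiprodι_π, Fin.mk.injEq]
  split_ifs <;> first | omega | contradiction | (subst_vars; simp)

lemma mono_partialOneSubShift (n : ℕ) : Mono (partialOneSubShift g n) := by
  refine Preadditive.mono_of_cancel_zero _ fun a ha => partialBiprod_hom_ext fun ⟨j, hj⟩ => ?_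
  rw [zero_comp]
  induction j with
  | zero =>
    have := ha =≫ partialBiprodπ Y (n + 1) ⟨0, by omega⟩
    rwa [Category.assoc, partialOneSubShift_π_zero, zero_comp] at this
  | succ j ih =>
    have := ha =≫ partialBiprodπ Y (n + 1) ⟨j + 1, by omega⟩
    rwa [Category.assoc, partialOneSubShift_π_succ g (by omega), Preadditive.comp_sub,
      reassoc_of% ih (by omega), zero_comp, sub_zero, zero_comp] at this

lemma partialOneSubShift_naturality {m n : ℕ} (h : m ⟶ n) :
    (partialBiprod Y).map h ≫ partialOneSubShift g n =
      partialOneSubShift g m ≫ (partialBiprod Y).map (homOfLE (by have := leOfHom h; omega)) := by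
  ext k
  simp [reassoc_of% partialBiprodι_map, reassoc_of% partialBiprodι_partialOneSubShift]

noncomputable def partialOneSubShiftNatTrans :
    partialBiprod Y ⟶ Nat.succFunctor ⋙ partialBiprod Y where
  app := partialOneSubShift g
  naturality _ _ h := partialOneSubShift_naturality g h

variable [HasCoproduct Y]

lemma partialOneSubShift_comp_ι_app (n : ℕ) :
    partialOneSubShift g n ≫ (partialBiprodCocone Y).ι.app (n + 1) =
      (partialBiprodCocone Y).ι.app n ≫
        Sigma.desc fun n => Sigma.ι Y n - g n ≫ Sigma.ι Y (n + 1) := by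
  ext k
  simp [reassoc_of% partialBiprodι_desc, reassoc_of% partialBiprodι_partialOneSubShift]

theorem mono_sigmaDesc_ι_sub_comp_ι [HasColimitsOfShape ℕ D]
    [(colim : (ℕ ⥤ D) ⥤ D).PreservesMonomorphisms] :
    Mono (Sigma.desc fun n => Sigma.ι Y n - g n ≫ Sigma.ι Y (n + 1)) := by
  have : ∀ n, Mono ((partialOneSubShiftNatTrans g).app n) := mono_partialOneSubShift g
  have := NatTrans.mono_of_mono_app (partialOneSubShiftNatTrans g)
  exact colim.map_mono' (partialOneSubShiftNatTrans g) (isColimitPartialBiprodCocone Y)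
    ((Functor.Final.isColimitWhiskerEquiv Nat.succFunctor _).symm (isColimitPartialBiprodCocone Y))
    _ fun n => (partialOneSubShift_comp_ι_app g n).symm

end OneSubShift

theorem hocolim_to_colim_quasiIso
    {C : Type u} [Category.{v} C] [Abelian C]
    [HasColimitsOfSize.{0, 0} C] [HasFilteredColimits C] [AB5 C]
    (X : ℕ → CochainComplex C ℤ) (f : ∀ n, X n ⟶ X (n + 1))
    -- the `1 − shift` map `⊕ₙ Xₙ → ⊕ₙ Xₙ`:
    (u : (∐ X) ⟶ (∐ X))
    (hu : u = Sigma.desc fun n => Sigma.ι X n - (f n ≫ Sigma.ι X (n + 1)))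
    (eq : δ (-1) 0 (0 : Cochain (∐ X) (cokernel u) (-1)) =
      Cochain.ofHom (u ≫ cokernel.π u)) :
    QuasiIso (CochainComplex.mappingCone.desc u 0 (cokernel.π u) eq) := by
  have hu_mono : Mono u := by
    have : AB5OfSize.{0, 0} C := AB5OfSize_shrink C
    have : HasFiniteBiproducts (CochainComplex C ℤ) := HasFiniteBiproducts.of_hasFiniteProducts
    rw [hu]
    exact mono_sigmaDesc_ι_sub_comp_ι f
  have hS : (ShortComplex.mk u (cokernel.π u) (cokernel.condition u)).ShortExact :=
    .mk' (ShortComplex.exact_of_g_is_cokernel _ (cokernelIsCokernel u)) hu_mono coequalizer.π_epi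
  -- elaborated without the expected type, so that `S` is read off `hS` instead of being
  -- unified against `mappingCone.desc`
  exact (mappingCone.quasiIso_descShortComplex hS :)
end
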